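/- arXiv:1309.0805 — 5 statements merged into one kernel-verified Lean document; each statement's English description precedes it below -/
import Mathlib

section
/- Let k ≥ 1 and n ≥ 1 be integers, and let C₀, C₁, ..., C_k be real numbers with N = Σ_{i=0}^k C_i ≠ 0, (n-1)/N < 1, and C_i/N > 0 for i = 0, 1, ..., k, such that C₀ is not an integer. Then there exists A > 0 such that for every integer a > A satisfying a > N/C_i for i = 1, ..., k, the sets S and S*_a are equal. -/
/-- Let k ≥ 1 and n ≥ 1 be integers, and let C₀, C₁, ..., C_k be real
numbers with N = Σ_{i=0}^k C_i ≠ 0, (n-1)/N < 1, and C_i/N > 0 for i = 0, 1, ..., k,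
such that C₀ is not an integer. Then there exists A > 0 such that for every integer
a > A satisfying a > N/C_i for i = 1, ..., k, the sets S and S*_a are equal. -/
theorem support_sets_eq (k n : ℕ) (hk : 1 ≤ k) (hn : 1 ≤ n)
    (C : Fin (k + 1) → ℝ) (N : ℝ) (hN : N = ∑ i, C i) (hN0 : N ≠ 0)
    (hn1 : ((n : ℝ) - 1) / N < 1) (hC : ∀ i, C i / N > 0)
    (hC0 : ∀ m : ℤ, C 0 ≠ (m : ℝ)) :
    ∃ A : ℝ, 0 < A ∧ ∀ a : ℤ, (a : ℝ) > A →
      (∀ i : Fin (k + 1), i ≠ 0 → (a : ℝ) > N / C i) →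
      ({x : Fin (k + 1) → ℕ | (∑ i, x i) = n ∧
          ∀ i, ¬(0 < C i ∧ (x i : ℝ) ≥ 1 + C i)} =
       {x : Fin (k + 1) → ℕ | (∑ i, x i) = n ∧
          ∀ i, 0 < x i →
            (if i = 0 then
                a - ∑ j ∈ Finset.univ.erase (0 : Fin (k + 1)), ⌊(a : ℝ) * C j / N⌋
              else ⌊(a : ℝ) * C i / N⌋)
              + ((x i : ℤ) - 1) * (-⌈(a : ℝ) / N⌉) > 0}) := by
  have hE0 : (0 : Fin (k+1)) ∈ (Finset.univ : Finset (Fin (k+1))) := Finset.mem_univ _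
  have hEsum : ∑ j ∈ Finset.univ.erase (0 : Fin (k+1)), C j = N - C 0 := by
    have h1 := Finset.sum_erase_add Finset.univ C hE0
    rw [hN]; linarith
  have hEcard : (Finset.univ.erase (0 : Fin (k+1))).card = k := by
    rw [Finset.card_erase_of_mem hE0, Finset.card_univ, Fintype.card_fin]
    omega
  have hSle : ∀ a : ℤ, ∑ j ∈ Finset.univ.erase (0 : Fin (k+1)), (⌊(a:ℝ) * C j / N⌋ : ℝ)
      ≤ (a:ℝ) - (a:ℝ) * C 0 / N := by
    intro a
    have h1 : ∀ j ∈ Finset.univ.erase (0 : Fin (k+1)),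
        (⌊(a:ℝ) * C j / N⌋ : ℝ) ≤ (a:ℝ) * C j / N := fun j _ => Int.floor_le _
    have h2 := Finset.sum_le_sum h1
    have h3 : ∑ j ∈ Finset.univ.erase (0 : Fin (k+1)), (a:ℝ) * C j / N
        = (a:ℝ) - (a:ℝ) * C 0 / N := by
      rw [← Finset.sum_div, ← Finset.mul_sum, hEsum]
      field_simp
    linarith
  have hSge : ∀ a : ℤ, (a:ℝ) - (a:ℝ) * C 0 / N - k
      ≤ ∑ j ∈ Finset.univ.erase (0 : Fin (k+1)), (⌊(a:ℝ) * C j / N⌋ : ℝ) := by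
    intro a
    have h1 : ∀ j ∈ Finset.univ.erase (0 : Fin (k+1)),
        (a:ℝ) * C j / N - 1 ≤ (⌊(a:ℝ) * C j / N⌋ : ℝ) := fun j _ =>
      (Int.sub_one_lt_floor _).le
    have h2 := Finset.sum_le_sum h1
    have h3 : ∑ j ∈ Finset.univ.erase (0 : Fin (k+1)), (a:ℝ) * C j / N
        = (a:ℝ) - (a:ℝ) * C 0 / N := by
      rw [← Finset.sum_div, ← Finset.mul_sum, hEsum]
      field_simp
    rw [Finset.sum_sub_distrib, Finset.sum_const, hEcard, h3] at h2
    simpa using h2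
  rcases lt_or_gt_of_ne hN0 with hNneg | hNpos
  · -- Case N < 0 : both conditions are vacuous / always true
    have hCneg : ∀ i, C i < 0 := by
      intro i
      rcases div_pos_iff.mp (hC i) with ⟨_, h2⟩ | ⟨h1, _⟩
      · linarith
      · exact h1
    refine ⟨1, one_pos, ?_⟩
    intro a ha hai
    have ha0 : (0:ℝ) < a := by linarith
    have hcnn : (0:ℤ) ≤ -⌈(a:ℝ)/N⌉ := by
      have hdn : (a:ℝ)/N ≤ 0 := by
        rw [div_nonpos_iff]; left; exact ⟨ha0.le, hNneg.le⟩
      have := Int.ceil_le.mpr (show (a:ℝ)/N ≤ ((0:ℤ):ℝ) by exact_mod_cast hdn)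
      linarith
    have hfl1 : ∀ i : Fin (k+1), i ≠ 0 → (1:ℤ) ≤ ⌊(a:ℝ) * C i / N⌋ := by
      intro i hi
      apply Int.le_floor.mpr
      have h1 := hai i hi
      have h2 := hC i
      have hCi0 : C i ≠ 0 := fun h => by simp [h] at h2
      have h3 : (N / C i) * (C i / N) = 1 := by field_simp
      have h4 : (N / C i) * (C i / N) < (a:ℝ) * (C i / N) :=
        mul_lt_mul_of_pos_right h1 h2
      push_cast
      rw [mul_div_assoc]
      linarith
    have ha0pos : (0:ℤ) < a - ∑ j ∈ Finset.univ.erase (0 : Fin (k+1)), ⌊(a:ℝ) * C j / N⌋ := by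
      have h5 : 0 < (a:ℝ) * (C 0 / N) := mul_pos ha0 (hC 0)
      have h6 : (a:ℝ) * (C 0 / N) = (a:ℝ) * C 0 / N := (mul_div_assoc _ _ _).symm
      have h7 := hSle a
      rify
      linarith
    ext x
    simp only [Set.mem_setOf_eq]
    constructor
    · rintro ⟨hs, -⟩
      refine ⟨hs, ?_⟩
      intro i hxi
      have hx1 : (1:ℤ) ≤ (x i : ℤ) := by exact_mod_cast hxi
      have hterm : (0:ℤ) ≤ ((x i:ℤ) - 1) * (-⌈(a:ℝ)/N⌉) :=
        mul_nonneg (by linarith) hcnn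
      by_cases hi : i = 0
      · subst hi; rw [if_pos rfl]; linarith [ha0pos]
      · rw [if_neg hi]; linarith [hfl1 i hi]
    · rintro ⟨hs, -⟩
      exact ⟨hs, fun i h => absurd h.1 (lt_asymm (hCneg i))⟩
  · -- Case N > 0
    have hCpos : ∀ i, 0 < C i := by
      intro i
      rcases div_pos_iff.mp (hC i) with ⟨h1, _⟩ | ⟨_, h2⟩
      · exact h1
      · linarith
    have hδpos : 0 < (⌈C 0⌉ : ℝ) - C 0 := by
      rcases (Int.le_ceil (C 0)).lt_or_eq with h | h
      · linarith
      · exact absurd h (hC0 _)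
    have hTne : (Finset.univ ×ˢ Finset.range n : Finset (Fin (k+1) × ℕ)).Nonempty := by
      refine ⟨(0, 0), ?_⟩
      simp only [Finset.mem_product, Finset.mem_univ, Finset.mem_range, true_and]
      omega
    set f : Fin (k+1) × ℕ → ℝ := fun p =>
      if (p.2 : ℝ) < C p.1 then N * (p.2 + 1) / (C p.1 - p.2) else 0 with hf
    refine ⟨max 1 (max (N * k / ((⌈C 0⌉ : ℝ) - C 0))
      ((Finset.univ ×ˢ Finset.range n).sup' hTne f)),
      lt_of_lt_of_le one_pos (le_max_left _ _), ?_⟩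
    intro a ha hai
    have ha1 : (1 : ℝ) < a := lt_of_le_of_lt (le_max_left _ _) ha
    have ha0 : (0 : ℝ) < a := by linarith
    have key2 : N * k < (a:ℝ) * ((⌈C 0⌉ : ℝ) - C 0) := by
      have h1 : N * k / ((⌈C 0⌉ : ℝ) - C 0) < a :=
        lt_of_le_of_lt (le_trans (le_max_left _ _) (le_max_right _ _)) ha
      exact (div_lt_iff₀ hδpos).mp h1
    have key1 : ∀ i : Fin (k+1), ∀ t : ℕ, t < n → (t : ℝ) < C i →
        N * (t + 1) < (a:ℝ) * (C i - t) := by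
      intro i t htn htC
      have hmem : (i, t) ∈ (Finset.univ ×ˢ Finset.range n : Finset (Fin (k+1) × ℕ)) := by
        simp only [Finset.mem_product, Finset.mem_univ, Finset.mem_range, true_and]
        exact htn
      have h1 : f (i, t) ≤ max 1 (max (N * k / ((⌈C 0⌉ : ℝ) - C 0))
          ((Finset.univ ×ˢ Finset.range n).sup' hTne f)) :=
        le_trans (Finset.le_sup' f hmem) (le_trans (le_max_right _ _) (le_max_right _ _))
      simp only [hf] at h1
      rw [if_pos htC] at h1
      have h2 : N * (t + 1) / (C i - t) < a := lt_of_lt_of_le (lt_of_le_of_lt h1 ha) le_rfl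
      exact (div_lt_iff₀ (by linarith)).mp h2
    ext x
    simp only [Set.mem_setOf_eq]
    constructor
    · rintro ⟨hs, h⟩
      refine ⟨hs, ?_⟩
      intro i hxi
      have hxn : x i ≤ n := hs ▸ Finset.single_le_sum (fun j _ => Nat.zero_le (x j))
        (Finset.mem_univ i)
      have hlt : (x i : ℝ) < 1 + C i := by
        by_contra hge
        exact h i ⟨hCpos i, le_of_not_gt hge⟩
      obtain ⟨t, ht⟩ : ∃ t, x i = t + 1 := ⟨x i - 1, by omega⟩
      have htn : t < n := by omega
      have htC : (t : ℝ) < C i := by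
        rw [ht] at hlt; push_cast at hlt; linarith
      have hk1 := key1 i t htn htC
      have hceil : (⌈(a:ℝ)/N⌉ : ℝ) < (a:ℝ)/N + 1 := Int.ceil_lt_add_one _
      have hceilt : (t:ℝ) * (⌈(a:ℝ)/N⌉:ℝ) ≤ (t:ℝ) * ((a:ℝ)/N + 1) :=
        mul_le_mul_of_nonneg_left hceil.le (Nat.cast_nonneg t)
      have hdivk : (t:ℝ) + 1 < ((a:ℝ) * (C i - t)) / N :=
        (lt_div_iff₀ hNpos).mpr (by linarith)
      have hxz : ((x i : ℕ) : ℤ) - 1 = (t : ℤ) := by rw [ht]; push_cast; ring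
      by_cases hi : i = 0
      · subst hi
        rw [if_pos rfl, hxz]
        have h7 := hSle a
        have e1 : (a:ℝ) * (C 0 - (t:ℝ)) / N = (a:ℝ) * C 0 / N - (a:ℝ) * (t:ℝ) / N := by
          ring
        have e2 : (t:ℝ) * ((a:ℝ)/N + 1) = (a:ℝ) * (t:ℝ) / N + t := by ring
        have e3 : (t:ℝ) * (-(⌈(a:ℝ)/N⌉:ℝ)) = -((t:ℝ) * (⌈(a:ℝ)/N⌉:ℝ)) := by ring
        rify
        linarith
      · rw [if_neg hi, hxz]
        have hfl : ((t : ℤ) * ⌈(a:ℝ)/N⌉ + 1 : ℝ) ≤ (a:ℝ) * C i / N := by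
          have e1 : (a:ℝ) * (C i - (t:ℝ)) / N = (a:ℝ) * C i / N - (a:ℝ) * (t:ℝ) / N := by
            ring
          have e2 : (t:ℝ) * ((a:ℝ)/N + 1) = (a:ℝ) * (t:ℝ) / N + t := by ring
          push_cast
          linarith
        have h8 : (t : ℤ) * ⌈(a:ℝ)/N⌉ + 1 ≤ ⌊(a:ℝ) * C i / N⌋ :=
          Int.le_floor.mpr (by exact_mod_cast hfl)
        linarith
    · rintro ⟨hs, h⟩
      refine ⟨hs, ?_⟩
      intro i
      rintro ⟨hCi, hge⟩
      have hxi : 0 < x i := by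
        have hx : (0:ℝ) < (x i : ℝ) := by linarith
        exact_mod_cast hx
      have h2 := h i hxi
      have htR : C i ≤ (x i : ℝ) - 1 := by linarith
      have hcc : (a:ℝ)/N ≤ (⌈(a:ℝ)/N⌉:ℝ) := Int.le_ceil _
      have ht0 : (0:ℝ) ≤ (x i:ℝ) - 1 := by linarith
      by_cases hi : i = 0
      · subst hi
        rw [if_pos rfl] at h2
        have hceilC : (⌈C 0⌉ : ℝ) ≤ (x 0 : ℝ) - 1 := by
          have h3 : (⌈C 0⌉ : ℤ) ≤ (x 0 : ℤ) - 1 := Int.ceil_le.mpr (by push_cast; linarith)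
          exact_mod_cast h3
        have hmul : (a:ℝ) * ((⌈C 0⌉:ℝ) - C 0) ≤ (a:ℝ) * (((x 0:ℝ) - 1) - C 0) :=
          mul_le_mul_of_nonneg_left (by linarith) ha0.le
        have hcc' : ((x 0:ℝ)-1) * ((a:ℝ)/N) ≤ ((x 0:ℝ)-1) * (⌈(a:ℝ)/N⌉:ℝ) :=
          mul_le_mul_of_nonneg_left hcc ht0
        have hdivk2 : (k:ℝ) < ((a:ℝ) * (((x 0:ℝ)-1) - C 0))/N :=
          (lt_div_iff₀ hNpos).mpr (by linarith)
        have h9 := hSge a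
        have e1 : (a:ℝ) * (((x 0:ℝ) - 1) - C 0) / N
            = ((x 0:ℝ) - 1) * ((a:ℝ)/N) - (a:ℝ) * C 0 / N := by ring
        have e3 : ((x 0:ℝ) - 1) * (-(⌈(a:ℝ)/N⌉:ℝ))
            = -(((x 0:ℝ) - 1) * (⌈(a:ℝ)/N⌉:ℝ)) := by ring
        rify at h2
        linarith
      · rw [if_neg hi] at h2
        have hfl : (⌊(a:ℝ) * C i / N⌋:ℝ) ≤ (a:ℝ) * C i / N := Int.floor_le _
        have hmul : (a:ℝ) * C i / N ≤ (a:ℝ) * ((x i:ℝ)-1) / N := by gcongr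
        have hcc' : ((x i:ℝ)-1) * ((a:ℝ)/N) ≤ ((x i:ℝ)-1) * (⌈(a:ℝ)/N⌉:ℝ) :=
          mul_le_mul_of_nonneg_left hcc ht0
        have e2 : (a:ℝ) * ((x i:ℝ) - 1) / N = ((x i:ℝ) - 1) * ((a:ℝ)/N) := by ring
        have e3 : ((x i:ℝ) - 1) * (-(⌈(a:ℝ)/N⌉:ℝ))
            = -(((x i:ℝ) - 1) * (⌈(a:ℝ)/N⌉:ℝ)) := by ring
        rify at h2
        linarith
end

section
/- Let k ≥ 1 and γ ≥ 1 be integers, and let C₀, C₁, ..., C_k be real numbers with N = Σ_{i=0}^k C_i ≠ 0 and C_i/N > 0 for i = 1, ..., k. Then there exists A > 0 such that for every integer a > A satisfying a > N/C_i for i = 1, ..., k, the sets T and T*_a are equal. -/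
set_option maxHeartbeats 1000000


/-- Let k ≥ 1 and γ ≥ 1 be integers, and let C₀, C₁, ..., C_k be real
numbers with N = Σ_{i=0}^k C_i ≠ 0 and C_i/N > 0 for i = 1, ..., k. Then there exists
A > 0 such that for every integer a > A satisfying a > N/C_i for i = 1, ..., k, the
sets T and T*_a are equal. -/
theorem inverse_support_sets_eq (k : ℕ) (hk : 1 ≤ k) (γ : ℕ) (hγ : 1 ≤ γ)
    (C : Fin (k + 1) → ℝ) (N : ℝ) (hN : N = ∑ i, C i) (hN0 : N ≠ 0)
    (hC : ∀ i : Fin (k + 1), i ≠ 0 → C i / N > 0) :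
    ∃ A : ℝ, 0 < A ∧ ∀ a : ℤ, (a : ℝ) > A →
      (∀ i : Fin (k + 1), i ≠ 0 → (a : ℝ) > N / C i) →
      ({x : Fin (k + 1) → ℕ | x 0 = γ ∧
          (((∑ i, x i : ℕ) : ℝ) - 1) / N < 1 ∧
          ∀ i, i ≠ 0 → ¬(0 < C i ∧ (x i : ℝ) ≥ 1 + C i)} =
       {x : Fin (k + 1) → ℕ | x 0 = γ ∧
          a + (((∑ i, x i : ℕ) : ℤ) - 1) * (-⌈(a : ℝ) / N⌉) > 0 ∧
          ∀ i, i ≠ 0 → 0 < x i →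
            ⌊(a : ℝ) * C i / N⌋ + ((x i : ℤ) - 1) * (-⌈(a : ℝ) / N⌉) > 0}) := by
  classical
  refine ⟨1 + |((⌈N⌉ : ℝ) - 1) * N / (N - ((⌈N⌉ : ℝ) - 1))|
      + ∑ i, |(⌈C i⌉ : ℝ) * N / (C i - ((⌈C i⌉ : ℝ) - 1))|, by positivity, ?_⟩
  intro a ha haC
  have habs0 : (0:ℝ) ≤ |((⌈N⌉ : ℝ) - 1) * N / (N - ((⌈N⌉ : ℝ) - 1))| := abs_nonneg _
  have hsum0 : (0:ℝ) ≤ ∑ i, |(⌈C i⌉ : ℝ) * N / (C i - ((⌈C i⌉ : ℝ) - 1))| :=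
    Finset.sum_nonneg fun i _ => abs_nonneg _
  have ha1 : (1:ℝ) < a := by linarith
  have ha0 : (0:ℝ) < a := lt_trans one_pos ha1
  have haZ : (0:ℤ) < a := by exact_mod_cast ha0
  have haB : ((⌈N⌉ : ℝ) - 1) * N / (N - ((⌈N⌉ : ℝ) - 1)) < a := by
    have h1 := le_abs_self (((⌈N⌉ : ℝ) - 1) * N / (N - ((⌈N⌉ : ℝ) - 1)))
    linarith
  have haBi : ∀ i : Fin (k+1), (⌈C i⌉ : ℝ) * N / (C i - ((⌈C i⌉ : ℝ) - 1)) < a := by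
    intro i
    have h1 := le_abs_self ((⌈C i⌉ : ℝ) * N / (C i - ((⌈C i⌉ : ℝ) - 1)))
    have h2 : |(⌈C i⌉ : ℝ) * N / (C i - ((⌈C i⌉ : ℝ) - 1))|
        ≤ ∑ j, |(⌈C j⌉ : ℝ) * N / (C j - ((⌈C j⌉ : ℝ) - 1))| :=
      Finset.single_le_sum (f := fun j => |(⌈C j⌉ : ℝ) * N / (C j - ((⌈C j⌉ : ℝ) - 1))|)
        (fun j _ => abs_nonneg _) (Finset.mem_univ i)
    linarith
  ext x
  simp only [Set.mem_setOf_eq]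
  set nn : ℕ := ∑ i, x i with hnn
  set M : ℤ := ⌈(a : ℝ) / N⌉ with hM
  have hn1 : x 0 = γ → 1 ≤ nn := by
    intro hx0
    calc 1 ≤ γ := hγ
    _ = x 0 := hx0.symm
    _ ≤ nn := Finset.single_le_sum (f := fun i => x i) (fun j _ => Nat.zero_le _)
        (Finset.mem_univ 0)
  rcases lt_or_gt_of_ne hN0 with hNneg | hNpos
  · -- N < 0 : both sets are {x | x 0 = γ}
    have hCneg : ∀ i : Fin (k+1), i ≠ 0 → C i < 0 := by
      intro i hi
      have h2 := mul_neg_of_pos_of_neg (hC i hi) hNneg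
      rwa [div_mul_cancel₀ _ hN0] at h2
    have hm0 : M ≤ 0 := by
      rw [hM]
      have h : (a:ℝ)/N ≤ ((0:ℤ):ℝ) := by
        push_cast
        exact div_nonpos_of_nonneg_of_nonpos ha0.le hNneg.le
      exact Int.ceil_le.mpr h
    constructor
    · rintro ⟨hx0, -, -⟩
      have hnn1 := hn1 hx0
      have ht0 : (0:ℤ) ≤ (nn:ℤ) - 1 := by
        have : (1:ℤ) ≤ (nn:ℤ) := by exact_mod_cast hnn1
        linarith
      refine ⟨hx0, ?_, ?_⟩
      · have := mul_nonneg ht0 (neg_nonneg.mpr hm0)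
        linarith
      · intro i hi hxi
        have hCi := hCneg i hi
        have hCi0 : C i ≠ 0 := hCi.ne
        have h3 : (a:ℝ) * C i < N := by
          have h4 := mul_lt_mul_of_neg_right (haC i hi) hCi
          rwa [div_mul_cancel₀ _ hCi0] at h4
        have hfl : (1:ℤ) ≤ ⌊(a:ℝ) * C i / N⌋ := by
          apply Int.le_floor.mpr
          push_cast
          rw [le_div_iff_of_neg hNneg]
          linarith
        have ht0' : (0:ℤ) ≤ (x i : ℤ) - 1 := by
          have : (1:ℤ) ≤ (x i : ℤ) := by exact_mod_cast hxi
          linarith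
        have := mul_nonneg ht0' (neg_nonneg.mpr hm0)
        linarith
    · rintro ⟨hx0, -, -⟩
      have hnn1 := hn1 hx0
      refine ⟨hx0, ?_, ?_⟩
      · have hnum : (0:ℝ) ≤ (nn:ℝ) - 1 := by
          have : (1:ℝ) ≤ (nn:ℝ) := by exact_mod_cast hnn1
          linarith
        have := div_nonpos_of_nonneg_of_nonpos hnum hNneg.le
        linarith
      · intro i hi h
        exact absurd h.1 (not_lt.mpr (hCneg i hi).le)
  · -- N > 0
    have hCpos : ∀ i : Fin (k+1), i ≠ 0 → 0 < C i := by
      intro i hi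
      have h2 := mul_pos (hC i hi) hNpos
      rwa [div_mul_cancel₀ _ hN0] at h2
    have hm_ge : (a:ℝ)/N ≤ (M:ℝ) := Int.le_ceil _
    have hm_lt : (M:ℝ) < (a:ℝ)/N + 1 := Int.ceil_lt_add_one _
    have hMpos : 0 < M := by
      rw [hM]; exact Int.ceil_pos.mpr (div_pos ha0 hNpos)
    have hMR : (1:ℝ) ≤ (M:ℝ) := by exact_mod_cast hMpos
    constructor
    · rintro ⟨hx0, hx1, hx2⟩
      have hnn1 := hn1 hx0
      refine ⟨hx0, ?_, ?_⟩
      · -- size condition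
        have hsceil : N ≤ (⌈N⌉:ℝ) := Int.le_ceil N
        have hslt : (⌈N⌉:ℝ) - 1 < N := by
          have := Int.ceil_lt_add_one N
          linarith
        have hs0 : (0:ℝ) ≤ (⌈N⌉:ℝ) - 1 := by
          have h1 : (0:ℤ) < ⌈N⌉ := Int.ceil_pos.mpr hNpos
          have h2 : (1:ℝ) ≤ (⌈N⌉:ℝ) := by exact_mod_cast h1
          linarith
        have hlt : ((nn:ℝ) - 1) < N := (div_lt_one hNpos).mp hx1
        have h1R : ((nn:ℝ) - 1) ≤ (⌈N⌉:ℝ) - 1 := by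
          have h1 : ((nn:ℤ) - 1 : ℝ) < (⌈N⌉:ℝ) := by push_cast; linarith
          have h2 : (nn:ℤ) - 1 < ⌈N⌉ := by exact_mod_cast h1
          have h3 : (nn:ℤ) - 1 ≤ ⌈N⌉ - 1 := by omega
          have h4 : ((nn:ℤ) - 1 : ℝ) ≤ ((⌈N⌉ - 1 : ℤ) : ℝ) := by exact_mod_cast h3
          push_cast at h4
          linarith
        have hB' : ((⌈N⌉:ℝ) - 1) * N < a * (N - ((⌈N⌉:ℝ) - 1)) :=
          (div_lt_iff₀ (by linarith)).mp haB
        have hp1 : ((nn:ℝ) - 1) * (M:ℝ) ≤ ((⌈N⌉:ℝ) - 1) * (M:ℝ) :=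
          mul_le_mul_of_nonneg_right h1R (by linarith)
        have hp2 : ((⌈N⌉:ℝ) - 1) * (M:ℝ) ≤ ((⌈N⌉:ℝ) - 1) * ((a:ℝ)/N + 1) :=
          mul_le_mul_of_nonneg_left hm_lt.le hs0
        have hp3 : ((⌈N⌉:ℝ) - 1) * ((a:ℝ)/N + 1) < a := by
          have e : ((⌈N⌉:ℝ) - 1) * ((a:ℝ)/N + 1)
              = (((⌈N⌉:ℝ) - 1) * a + ((⌈N⌉:ℝ) - 1) * N) / N := by
            field_simp
          rw [e, div_lt_iff₀ hNpos]
          nlinarith [hB']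
        have hfinZ : ((nn:ℤ) - 1) * M < a := by
          have h5 : (((nn:ℤ) - 1) * M : ℝ) < ((a:ℤ) : ℝ) := by push_cast; linarith
          exact_mod_cast h5
        linarith
      · -- coordinate conditions
        intro i hi hxi
        have hCi := hCpos i hi
        have hlt : (x i : ℝ) < 1 + C i := by
          by_contra h
          exact hx2 i hi ⟨hCi, not_lt.mp h⟩
        have ht0 : (0:ℤ) ≤ (x i : ℤ) - 1 := by
          have : (1:ℤ) ≤ (x i : ℤ) := by exact_mod_cast hxi
          linarith
        have hsi0 : (0:ℝ) ≤ (⌈C i⌉:ℝ) - 1 := by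
          have h1 : (0:ℤ) < ⌈C i⌉ := Int.ceil_pos.mpr hCi
          have h2 : (1:ℝ) ≤ (⌈C i⌉:ℝ) := by exact_mod_cast h1
          linarith
        have hdi : (0:ℝ) < C i - ((⌈C i⌉:ℝ) - 1) := by
          have := Int.ceil_lt_add_one (C i)
          linarith
        have hts : ((x i : ℝ) - 1) ≤ (⌈C i⌉:ℝ) - 1 := by
          have h1 : ((x i : ℤ) - 1 : ℝ) < (⌈C i⌉:ℝ) := by
            have := Int.le_ceil (C i)
            push_cast
            linarith
          have h2 : (x i : ℤ) - 1 < ⌈C i⌉ := by exact_mod_cast h1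
          have h3 : (x i : ℤ) - 1 ≤ ⌈C i⌉ - 1 := by omega
          have h4 : ((x i : ℤ) - 1 : ℝ) ≤ ((⌈C i⌉ - 1 : ℤ) : ℝ) := by exact_mod_cast h3
          push_cast at h4
          linarith
        have hBi' : (⌈C i⌉:ℝ) * N < a * (C i - ((⌈C i⌉:ℝ) - 1)) :=
          (div_lt_iff₀ hdi).mp (haBi i)
        have hp1 : ((x i : ℝ) - 1) * (M:ℝ) ≤ ((⌈C i⌉:ℝ) - 1) * (M:ℝ) :=
          mul_le_mul_of_nonneg_right hts (by linarith)
        have hp2 : ((⌈C i⌉:ℝ) - 1) * (M:ℝ) ≤ ((⌈C i⌉:ℝ) - 1) * ((a:ℝ)/N + 1) :=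
          mul_le_mul_of_nonneg_left hm_lt.le hsi0
        have hp3 : ((⌈C i⌉:ℝ) - 1) * ((a:ℝ)/N + 1) + 1 ≤ (a:ℝ) * C i / N := by
          have e : ((⌈C i⌉:ℝ) - 1) * ((a:ℝ)/N + 1) + 1
              = (((⌈C i⌉:ℝ) - 1) * a + (⌈C i⌉:ℝ) * N) / N := by
            field_simp
            ring
          rw [e, div_le_div_iff₀ hNpos hNpos]
          nlinarith [hBi']
        have hfl : ((x i : ℤ) - 1) * M + 1 ≤ ⌊(a:ℝ) * C i / N⌋ := by
          apply Int.le_floor.mpr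
          push_cast
          linarith
        linarith
    · rintro ⟨hx0, hx1, hx2⟩
      have hnn1 := hn1 hx0
      refine ⟨hx0, ?_, ?_⟩
      · -- size condition back
        have ht0R : (0:ℝ) ≤ (nn:ℝ) - 1 := by
          have : (1:ℝ) ≤ (nn:ℝ) := by exact_mod_cast hnn1
          linarith
        have htm : ((nn:ℤ) - 1) * M < a := by linarith
        have htmR : ((nn:ℝ) - 1) * (M:ℝ) < a := by
          have h5 : ((((nn:ℤ) - 1) * M : ℤ) : ℝ) < ((a:ℤ) : ℝ) := by exact_mod_cast htm
          push_cast at h5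
          linarith
        have hp : ((nn:ℝ) - 1) * ((a:ℝ)/N) ≤ ((nn:ℝ) - 1) * (M:ℝ) :=
          mul_le_mul_of_nonneg_left hm_ge ht0R
        have hq : ((nn:ℝ) - 1) * a < a * N := by
          have h6 : ((nn:ℝ) - 1) * ((a:ℝ)/N) < a := by linarith
          have h7 : ((nn:ℝ) - 1) * ((a:ℝ)/N) = ((nn:ℝ) - 1) * a / N := by ring
          rw [h7, div_lt_iff₀ hNpos] at h6
          linarith
        have hr : (nn:ℝ) - 1 < N := by
          by_contra h
          push_neg at h
          have := mul_le_mul_of_nonneg_right h ha0.le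
          nlinarith
        rw [div_lt_one hNpos]
        linarith
      · -- coordinate back
        intro i hi
        rintro ⟨hCi, hxi⟩
        have hxpos : 0 < x i := by
          have h1 : (1:ℝ) < (x i : ℝ) := by linarith
          have h2 : (1:ℕ) < x i := by exact_mod_cast h1
          omega
        have h := hx2 i hi hxpos
        have htm : ((x i : ℤ) - 1) * M < ⌊(a:ℝ) * C i / N⌋ := by linarith
        have htmR : ((x i : ℝ) - 1) * (M:ℝ) < (a:ℝ) * C i / N := by
          have h5 : ((((x i : ℤ) - 1) * M : ℤ) : ℝ) < ((⌊(a:ℝ) * C i / N⌋ : ℤ) : ℝ) := by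
            exact_mod_cast htm
          push_cast at h5
          have := Int.floor_le ((a:ℝ) * C i / N)
          linarith
        have hp1 : C i * ((a:ℝ)/N) ≤ C i * (M:ℝ) :=
          mul_le_mul_of_nonneg_left hm_ge hCi.le
        have hp2 : C i * (M:ℝ) ≤ ((x i : ℝ) - 1) * (M:ℝ) :=
          mul_le_mul_of_nonneg_right (by linarith) (by linarith)
        have e : (a:ℝ) * C i / N = C i * ((a:ℝ)/N) := by ring
        rw [e] at htmR
        linarith
end

section
/- Let k ≥ 1 and n ≥ 1 be integers, and let C₀, C₁, ..., C_k be real numbers with N = Σ_{i=0}^k C_i ≠ 0, (n-1)/N < 1, and C_i/N > 0 for i = 0, 1, ..., k. Fix a tuple (x₀, x₁, ..., x_k) of nonnegative integers with Σ_{i=0}^k x_i = n. Then, as the positive integer a tends to infinity, (n! / (x₀!·x₁!⋯x_k!)) · (∏_{i=0}^k ∏_{ℓ=1}^{x_i} (a_i(a) + (ℓ−1)·c(a))) / (∏_{ℓ=1}^n (a + (ℓ−1)·c(a))) converges to (∏_{i=0}^k C(C_i, x_i)) / C(N, n). -/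
/-!
Write `y^(m,c) = y (y + c) ⋯ (y + (m - 1) c)`. The Pólya–Eggenberger probability is
`n! / ∏ xᵢ! · ∏ aᵢ^(xᵢ,c) / a^(n,c)` with `a = ∑ aᵢ`, and since `∑ xᵢ = n` it is unchanged when
all `aᵢ` and `c` are scaled by a common `s ≠ 0`. Scaling by `1/a`, the parameters tend to
`Cᵢ/N` and `-1/N`, where the ratio is continuous because `N (N - 1) ⋯ (N - n + 1) ≠ 0`.
Scaling back by `N` lands at `c = -1`, where `y^(m,-1) = m! · C(y, m)`.
-/

open Filter Topology Finset

/-- The generalized binomial coefficient C(t, m) = (∏_{ℓ=1}^m (t - ℓ + 1)) / m!,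
with C(t, 0) = 1, for a real number t and a nonnegative integer m. -/
noncomputable def genChoose (t : ℝ) (m : ℕ) : ℝ :=
  (∏ ℓ ∈ Finset.range m, (t - ℓ)) / (m.factorial : ℝ)

noncomputable def genRising (y c : ℝ) (m : ℕ) : ℝ :=
  ∏ ℓ ∈ range m, (y + ℓ * c)

lemma genRising_mul (s y c : ℝ) (m : ℕ) :
    genRising (s * y) (s * c) m = s ^ m * genRising y c m := by
  calc ∏ ℓ ∈ range m, (s * y + ℓ * (s * c)) = ∏ ℓ ∈ range m, s * (y + ℓ * c) :=
        prod_congr rfl fun ℓ _ => by ring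
    _ = s ^ m * genRising y c m := by rw [prod_mul_distrib, prod_const, card_range, genRising]

lemma genChoose_eq_genRising (t : ℝ) (m : ℕ) :
    genChoose t m = genRising t (-1) m / m.factorial := by
  rw [genChoose, genRising]
  congr 1
  exact prod_congr rfl fun ℓ _ => by ring

lemma genRising_neg_one_ne_zero {N : ℝ} {n : ℕ} (hN0 : N ≠ 0) (hn : ((n : ℝ) - 1) / N < 1) :
    genRising N (-1) n ≠ 0 := by
  refine prod_ne_zero_iff.mpr fun ℓ hℓ => ?_
  have hℓn : (ℓ : ℝ) + 1 ≤ n := by exact_mod_cast mem_range.mp hℓ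
  rcases hN0.lt_or_gt with hN | hN
  · have : (0 : ℝ) ≤ ℓ := ℓ.cast_nonneg
    linarith
  · have := (div_lt_one hN).mp hn
    linarith

lemma Filter.Tendsto.genRising {α : Type*} {l : Filter α} {f g : α → ℝ} {y c : ℝ}
    (hf : Tendsto f l (𝓝 y)) (hg : Tendsto g l (𝓝 c)) (m : ℕ) :
    Tendsto (fun a => genRising (f a) (g a) m) l (𝓝 (genRising y c m)) :=
  tendsto_finsetProd _ fun _ _ => hf.add (tendsto_const_nhds.mul hg)

section polyaRatio

variable {ι : Type*} [Fintype ι] (x : ι → ℕ)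

-- The Pólya–Eggenberger probability of drawing `xᵢ` balls of colour `i` from an urn holding `yᵢ`
-- of them, when `c` balls of the drawn colour are added after each draw.
noncomputable def polyaRatio (y : ι → ℝ) (c : ℝ) : ℝ :=
  ((∑ i, x i).factorial / ∏ i, ((x i).factorial : ℝ)) * (∏ i, genRising (y i) c (x i)) /
    genRising (∑ i, y i) c (∑ i, x i)

lemma polyaRatio_mul {s : ℝ} (hs : s ≠ 0) (y : ι → ℝ) (c : ℝ) :
    polyaRatio x (fun i => s * y i) (s * c) = polyaRatio x y c := by
  simp only [polyaRatio, genRising_mul, ← mul_sum, prod_mul_distrib, prod_pow_eq_pow_sum]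
  rw [mul_left_comm, mul_div_mul_left _ _ (pow_ne_zero _ hs)]

lemma polyaRatio_neg_one (y : ι → ℝ) :
    polyaRatio x y (-1) = (∏ i, genChoose (y i) (x i)) / genChoose (∑ i, y i) (∑ i, x i) := by
  simp only [polyaRatio, genChoose_eq_genRising, prod_div_distrib, div_div_eq_mul_div]
  ring

lemma tendsto_polyaRatio {α : Type*} {l : Filter α} {y : α → ι → ℝ} {c : α → ℝ}
    {y₀ : ι → ℝ} {c₀ : ℝ} (hy : ∀ i, Tendsto (fun a => y a i) l (𝓝 (y₀ i)))
    (hc : Tendsto c l (𝓝 c₀)) (h₀ : genRising (∑ i, y₀ i) c₀ (∑ i, x i) ≠ 0) :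
    Tendsto (fun a => polyaRatio x (y a) (c a)) l (𝓝 (polyaRatio x y₀ c₀)) :=
  (tendsto_const_nhds.mul (tendsto_finsetProd _ fun i _ => (hy i).genRising hc _)).div
    ((tendsto_finsetSum _ fun i _ => hy i).genRising hc _) h₀

end polyaRatio

lemma tendsto_inv_mul_of_abs_sub_mul_le {f : ℕ → ℝ} {r B : ℝ} (h : ∀ a, |f a - a * r| ≤ B) :
    Tendsto (fun a : ℕ => (a : ℝ)⁻¹ * f a) atTop (𝓝 r) := by
  have herr : Tendsto (fun a : ℕ => (a : ℝ)⁻¹ * (f a - a * r)) atTop (𝓝 0) := by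
    refine squeeze_zero_norm (fun a => ?_) (tendsto_const_div_atTop_nhds_zero_nat B)
    rw [norm_mul, norm_inv, Real.norm_natCast, Real.norm_eq_abs, inv_mul_eq_div]
    exact div_le_div_of_nonneg_right (h a) a.cast_nonneg
  rw [← add_zero r]
  refine (herr.const_add r).congr' ?_
  filter_upwards [eventually_ne_atTop 0] with a ha
  field_simp
  ring

lemma tendsto_inv_mul_floor_mul (r : ℝ) :
    Tendsto (fun a : ℕ => (a : ℝ)⁻¹ * ⌊a * r⌋) atTop (𝓝 r) :=
  tendsto_inv_mul_of_abs_sub_mul_le (B := 1) fun a => abs_sub_le_iff.mpr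
    ⟨by linarith [Int.floor_le ((a : ℝ) * r)],
      by linarith [Int.lt_floor_add_one ((a : ℝ) * r)]⟩

lemma tendsto_inv_mul_ceil_mul (r : ℝ) :
    Tendsto (fun a : ℕ => (a : ℝ)⁻¹ * ⌈a * r⌉) atTop (𝓝 r) :=
  tendsto_inv_mul_of_abs_sub_mul_le (B := 1) fun a => abs_sub_le_iff.mpr
    ⟨by linarith [Int.ceil_lt_add_one ((a : ℝ) * r)],
      by linarith [Int.le_ceil ((a : ℝ) * r)]⟩

section urnBalls

variable {k : ℕ} (C : Fin (k + 1) → ℝ) (N : ℝ)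

-- The paper's `aᵢ(a)`: `a₀(a)` absorbs the rounding, so that the urn holds exactly `a` balls.
noncomputable def urnBalls (a : ℕ) (i : Fin (k + 1)) : ℤ :=
  if i = 0 then a - ∑ j ∈ univ.erase 0, ⌊a * C j / N⌋ else ⌊a * C i / N⌋

lemma sum_urnBalls (a : ℕ) : ∑ i, urnBalls C N a i = a := by
  have hrest : ∑ j ∈ univ.erase 0, urnBalls C N a j = ∑ j ∈ univ.erase 0, ⌊a * C j / N⌋ :=
    sum_congr rfl fun j hj => if_neg (ne_of_mem_erase hj)
  rw [← add_sum_erase _ _ (mem_univ 0), hrest, urnBalls, if_pos rfl, sub_add_cancel]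

variable {C N}

lemma tendsto_inv_mul_urnBalls (hN : N = ∑ i, C i) (hN0 : N ≠ 0) (i : Fin (k + 1)) :
    Tendsto (fun a : ℕ => (a : ℝ)⁻¹ * urnBalls C N a i) atTop (𝓝 (N⁻¹ * C i)) := by
  have hfloor (j : Fin (k + 1)) :
      Tendsto (fun a : ℕ => (a : ℝ)⁻¹ * ⌊a * C j / N⌋) atTop (𝓝 (N⁻¹ * C j)) := by
    refine (tendsto_inv_mul_floor_mul (N⁻¹ * C j)).congr fun a => ?_
    rw [mul_div_assoc, div_eq_inv_mul]
  rcases eq_or_ne i 0 with rfl | hi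
  · have hsum : N⁻¹ * C 0 = 1 - ∑ j ∈ univ.erase 0, N⁻¹ * C j := by
      rw [eq_sub_iff_add_eq, add_sum_erase univ (fun j => N⁻¹ * C j) (mem_univ 0), ← mul_sum,
        ← hN, inv_mul_cancel₀ hN0]
    rw [hsum]
    refine (tendsto_const_nhds.sub (tendsto_finsetSum _ fun j _ => hfloor j)).congr' ?_
    filter_upwards [eventually_ne_atTop 0] with a ha
    simp [urnBalls, mul_sub, mul_sum, ha]
  · simpa [urnBalls, hi] using hfloor i

end urnBalls

theorem polya_tendsto_genHyper_general (k n : ℕ)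
    (C : Fin (k + 1) → ℝ) (N : ℝ) (hN : N = ∑ i, C i) (hN0 : N ≠ 0)
    (hn1 : ((n : ℝ) - 1) / N < 1)
    (x : Fin (k + 1) → ℕ) (hx : (∑ i, x i) = n) :
    Tendsto (fun a : ℕ =>
        ((n.factorial : ℝ) / ∏ i, ((x i).factorial : ℝ)) *
        (∏ i, ∏ ℓ ∈ Finset.range (x i),
          (((if i = 0 then
                (a : ℤ) - ∑ j ∈ Finset.univ.erase (0 : Fin (k + 1)), ⌊(a : ℝ) * C j / N⌋
              else ⌊(a : ℝ) * C i / N⌋) : ℝ)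
            + (ℓ : ℝ) * ((-⌈(a : ℝ) / N⌉ : ℤ) : ℝ))) /
        (∏ ℓ ∈ Finset.range n, ((a : ℝ) + (ℓ : ℝ) * ((-⌈(a : ℝ) / N⌉ : ℤ) : ℝ))))
      atTop
      (nhds ((∏ i, genChoose (C i) (x i)) / genChoose N n)) := by
  have hc :
      Tendsto (fun a : ℕ => (a : ℝ)⁻¹ * ((-⌈(a : ℝ) / N⌉ : ℤ) : ℝ)) atTop (𝓝 (N⁻¹ * -1)) := by
    convert (tendsto_inv_mul_ceil_mul N⁻¹).neg using 2 with a
    · push_cast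
      rw [div_eq_mul_inv, mul_neg]
    · ring
  have hlim_ne : genRising (∑ i, N⁻¹ * C i) (N⁻¹ * -1) (∑ i, x i) ≠ 0 := by
    rw [← mul_sum, genRising_mul, ← hN, hx]
    exact mul_ne_zero (pow_ne_zero _ (inv_ne_zero hN0)) (genRising_neg_one_ne_zero hN0 hn1)
  have hlim := tendsto_polyaRatio x (fun i => tendsto_inv_mul_urnBalls hN hN0 i) hc hlim_ne
  rw [polyaRatio_mul x (inv_ne_zero hN0), polyaRatio_neg_one, ← hN, hx] at hlim
  refine hlim.congr' ?_
  filter_upwards [eventually_ne_atTop 0] with a ha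
  rw [polyaRatio_mul x (inv_ne_zero (Nat.cast_ne_zero.mpr ha)), polyaRatio, ← Int.cast_sum,
    sum_urnBalls, hx]
  simp only [genRising, urnBalls, Int.cast_ite, Int.cast_sub, Int.cast_natCast]

/-- As the positive integer a tends to infinity, the Pólya-Eggenberger
probability (with parameters c(a) = -⌈a/N⌉, a_i(a) = ⌊a·C_i/N⌋ for i = 1, ..., k and
a₀(a) = a - Σ_{i=1}^k a_i(a)) converges to the multivariate generalized hypergeometric
probability (∏_{i=0}^k C(C_i, x_i)) / C(N, n). -/
theorem polya_tendsto_genHyper (k n : ℕ) (hk : 1 ≤ k) (hn : 1 ≤ n)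
    (C : Fin (k + 1) → ℝ) (N : ℝ) (hN : N = ∑ i, C i) (hN0 : N ≠ 0)
    (hn1 : ((n : ℝ) - 1) / N < 1) (hC : ∀ i, C i / N > 0)
    (x : Fin (k + 1) → ℕ) (hx : (∑ i, x i) = n) :
    Tendsto (fun a : ℕ =>
        ((n.factorial : ℝ) / ∏ i, ((x i).factorial : ℝ)) *
        (∏ i, ∏ ℓ ∈ Finset.range (x i),
          (((if i = 0 then
                (a : ℤ) - ∑ j ∈ Finset.univ.erase (0 : Fin (k + 1)), ⌊(a : ℝ) * C j / N⌋
              else ⌊(a : ℝ) * C i / N⌋) : ℝ)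
            + (ℓ : ℝ) * ((-⌈(a : ℝ) / N⌉ : ℤ) : ℝ))) /
        (∏ ℓ ∈ Finset.range n, ((a : ℝ) + (ℓ : ℝ) * ((-⌈(a : ℝ) / N⌉ : ℤ) : ℝ))))
      atTop
      (nhds ((∏ i, genChoose (C i) (x i)) / genChoose N n)) :=
  polya_tendsto_genHyper_general k n C N hN hN0 hn1 x hx
end

section
/- Let k ≥ 1 and n ≥ 1 be integers, let a₀, a₁, ..., a_k be positive integers with a = Σ_{i=0}^k a_i, and let c be an integer such that a_i + (n−1)·c > 0 for every i = 0, 1, ..., k. Then Σ over all (k+1)-tuples (x₀, x₁, ..., x_k) of nonnegative integers with Σ_{i=0}^k x_i = n of (n! / (x₀!·x₁!⋯x_k!)) · ∏_{i=0}^k ∏_{ℓ=1}^{x_i} (a_i + (ℓ−1)·c) equals ∏_{ℓ=1}^n (a + (ℓ−1)·c). (Equivalently, the multivariate Pólya-Eggenberger probability mass function sums to one.) -/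
open Finset Nat

private lemma sum_update_sub' {m n : ℕ} (x : Fin m → ℕ) (j : Fin m)
    (hx : ∑ i, x i = n + 1) (hj : 0 < x j) :
    ∑ i, Function.update x j (x j - 1) i = n := by
  rw [Finset.sum_update_of_mem (Finset.mem_univ j)]
  have h1 : ∑ i ∈ Finset.univ \ {j}, x i + x j = n + 1 := by
    rw [Finset.sum_eq_sum_sdiff_singleton_add (Finset.mem_univ j) x] at hx
    omega
  omega

private lemma sum_update_add' {m n : ℕ} (y : Fin m → ℕ) (j : Fin m)
    (hy : ∑ i, y i = n) :
    ∑ i, Function.update y j (y j + 1) i = n + 1 := by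
  rw [Finset.sum_update_of_mem (Finset.mem_univ j)]
  have h1 : ∑ i ∈ Finset.univ \ {j}, y i + y j = n := by
    rw [Finset.sum_eq_sum_sdiff_singleton_add (Finset.mem_univ j) y] at hy
    omega
  omega

private lemma multinomial_pascal {m n : ℕ} (x : Fin m → ℕ) (hx : ∑ i, x i = n + 1) :
    Nat.multinomial Finset.univ x
      = ∑ j ∈ Finset.univ.filter (fun j => 0 < x j),
          Nat.multinomial Finset.univ (Function.update x j (x j - 1)) := by
  have hprodpos : 0 < ∏ i, (x i)! := Finset.prod_pos fun i _ => Nat.factorial_pos _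
  apply Nat.eq_of_mul_eq_mul_left hprodpos
  rw [Nat.multinomial_spec, hx, Finset.mul_sum]
  have key : ∀ j ∈ Finset.univ.filter (fun j => 0 < x j),
      (∏ i, (x i)!) * Nat.multinomial Finset.univ (Function.update x j (x j - 1))
        = x j * n ! := by
    intro j hj
    simp only [Finset.mem_filter, Finset.mem_univ, true_and] at hj
    have hfac : ∏ i, (x i)! = x j * ∏ i, ((Function.update x j (x j - 1)) i)! := by
      rw [← Finset.mul_prod_erase Finset.univ (fun i => (x i)!) (Finset.mem_univ j),
        ← Finset.mul_prod_erase Finset.univ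
          (fun i => ((Function.update x j (x j - 1)) i)!) (Finset.mem_univ j)]
      have he : ∏ i ∈ Finset.univ.erase j, ((Function.update x j (x j - 1)) i)!
          = ∏ i ∈ Finset.univ.erase j, (x i)! := by
        refine Finset.prod_congr rfl fun i hi => ?_
        rw [Function.update_of_ne (Finset.ne_of_mem_erase hi)]
      have hj' : (x j)! = x j * ((Function.update x j (x j - 1)) j)! := by
        rw [Function.update_self]
        conv_lhs => rw [show x j = (x j - 1) + 1 by omega]
        rw [Nat.factorial_succ]
        congr 2; omega
      rw [he, hj']; ring
    rw [hfac, mul_assoc, Nat.multinomial_spec, sum_update_sub' x j hx hj]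
  rw [Finset.sum_congr rfl key, ← Finset.sum_mul]
  have hsum : ∑ j ∈ Finset.univ.filter (fun j => 0 < x j), x j = n + 1 := by
    rw [Finset.sum_filter_of_ne (fun j _ h => Nat.pos_of_ne_zero h), hx]
  rw [hsum, Nat.factorial_succ]

private lemma hupd1 {m : ℕ} (x : Fin m → ℕ) (j : Fin m) (hj : 0 < x j) :
    Function.update (Function.update x j (x j - 1)) j
      (Function.update x j (x j - 1) j + 1) = x := by
  rw [Function.update_self, Function.update_idem,
    show x j - 1 + 1 = x j by omega, Function.update_eq_self]

private lemma hupd2 {m : ℕ} (y : Fin m → ℕ) (j : Fin m) :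
    Function.update (Function.update y j (y j + 1)) j
      (Function.update y j (y j + 1) j - 1) = y := by
  rw [Function.update_self, Function.update_idem,
    show y j + 1 - 1 = y j from rfl, Function.update_eq_self]

private lemma polya_key (m : ℕ) (b : Fin m → ℤ) (c : ℤ) (n : ℕ) :
    ∑ x ∈ Finset.Nat.antidiagonalTuple m n,
      (Nat.multinomial Finset.univ x : ℤ) *
        ∏ i, ∏ ℓ ∈ Finset.range (x i), (b i + (ℓ : ℤ) * c)
      = ∏ ℓ ∈ Finset.range n, ((∑ i, b i) + (ℓ : ℤ) * c) := by
  induction n with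
  | zero =>
    rw [Finset.Nat.antidiagonalTuple_zero_right]
    simp [Nat.multinomial]
  | succ n ih =>
    set P : (Fin m → ℕ) → ℤ :=
      fun x => ∏ i, ∏ ℓ ∈ Finset.range (x i), (b i + (ℓ : ℤ) * c) with hP
    have step1 : ∑ x ∈ Finset.Nat.antidiagonalTuple m (n + 1),
        (Nat.multinomial Finset.univ x : ℤ) * P x
        = ∑ p ∈ (Finset.Nat.antidiagonalTuple m (n + 1)).sigma
            (fun x => Finset.univ.filter (fun j => 0 < x j)),
          (Nat.multinomial Finset.univ
            (Function.update p.1 p.2 (p.1 p.2 - 1)) : ℤ) * P p.1 := by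
      rw [Finset.sum_sigma]
      refine Finset.sum_congr rfl fun x hx => ?_
      have hxs : ∑ i, x i = n + 1 := Finset.Nat.mem_antidiagonalTuple.mp hx
      rw [multinomial_pascal x hxs]
      push_cast
      rw [Finset.sum_mul]
    have step2 : ∑ p ∈ (Finset.Nat.antidiagonalTuple m (n + 1)).sigma
            (fun x => Finset.univ.filter (fun j => 0 < x j)),
          (Nat.multinomial Finset.univ
            (Function.update p.1 p.2 (p.1 p.2 - 1)) : ℤ) * P p.1
        = ∑ q ∈ ((Finset.univ : Finset (Fin m)).sigma
            (fun _ => Finset.Nat.antidiagonalTuple m n)),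
          (Nat.multinomial Finset.univ q.2 : ℤ) *
            P (Function.update q.2 q.1 (q.2 q.1 + 1)) := by
      refine Finset.sum_nbij'
        (fun p => ⟨p.2, Function.update p.1 p.2 (p.1 p.2 - 1)⟩)
        (fun q => ⟨Function.update q.2 q.1 (q.2 q.1 + 1), q.1⟩)
        (fun p hp => ?_) (fun q hq => ?_) (fun p hp => ?_) (fun q hq => ?_)
        (fun p hp => ?_)
      · rw [Finset.mem_sigma] at hp
        obtain ⟨hx, hj⟩ := hp
        rw [Finset.mem_filter] at hj
        refine Finset.mem_sigma.mpr ⟨Finset.mem_univ _, ?_⟩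
        exact Finset.Nat.mem_antidiagonalTuple.mpr
          (sum_update_sub' p.1 p.2 (Finset.Nat.mem_antidiagonalTuple.mp hx) hj.2)
      · rw [Finset.mem_sigma] at hq
        refine Finset.mem_sigma.mpr ⟨?_, ?_⟩
        · exact Finset.Nat.mem_antidiagonalTuple.mpr
            (sum_update_add' q.2 q.1 (Finset.Nat.mem_antidiagonalTuple.mp hq.2))
        · refine Finset.mem_filter.mpr ⟨Finset.mem_univ _, ?_⟩
          show 0 < Function.update q.2 q.1 (q.2 q.1 + 1) q.1
          rw [Function.update_self]
          exact Nat.succ_pos _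
      · rw [Finset.mem_sigma, Finset.mem_filter] at hp
        exact congrArg (fun z => (⟨z, p.2⟩ : Σ _ : Fin m → ℕ, Fin m))
          (hupd1 p.1 p.2 hp.2.2)
      · exact congrArg (fun z => (⟨q.1, z⟩ : Σ _ : Fin m, Fin m → ℕ)) (hupd2 q.2 q.1)
      · rw [Finset.mem_sigma, Finset.mem_filter] at hp
        show _ = (Nat.multinomial Finset.univ (Function.update p.1 p.2 (p.1 p.2 - 1)) : ℤ) *
          P (Function.update (Function.update p.1 p.2 (p.1 p.2 - 1)) p.2
            (Function.update p.1 p.2 (p.1 p.2 - 1) p.2 + 1))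
        rw [hupd1 p.1 p.2 hp.2.2]
    have hPupd : ∀ (y : Fin m → ℕ) (j : Fin m),
        P (Function.update y j (y j + 1)) = (b j + (y j : ℤ) * c) * P y := by
      intro y j
      simp only [hP]
      rw [← Finset.mul_prod_erase Finset.univ _ (Finset.mem_univ j),
        ← Finset.mul_prod_erase Finset.univ
          (fun i => ∏ ℓ ∈ Finset.range (y i), (b i + (ℓ : ℤ) * c)) (Finset.mem_univ j)]
      have h1 : ∏ ℓ ∈ Finset.range (Function.update y j (y j + 1) j), (b j + (ℓ : ℤ) * c)
          = (∏ ℓ ∈ Finset.range (y j), (b j + (ℓ : ℤ) * c)) * (b j + (y j : ℤ) * c) := by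
        rw [Function.update_self, Finset.prod_range_succ]
      have h2 : ∏ i ∈ Finset.univ.erase j,
          ∏ ℓ ∈ Finset.range (Function.update y j (y j + 1) i), (b i + (ℓ : ℤ) * c)
          = ∏ i ∈ Finset.univ.erase j,
            ∏ ℓ ∈ Finset.range (y i), (b i + (ℓ : ℤ) * c) := by
        refine Finset.prod_congr rfl fun i hi => ?_
        rw [Function.update_of_ne (Finset.ne_of_mem_erase hi)]
      rw [h1, h2]; ring
    rw [step1, step2, Finset.sum_sigma]
    simp only [hPupd]
    rw [Finset.sum_comm]
    have key : ∀ y ∈ Finset.Nat.antidiagonalTuple m n,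
        ∑ j, (Nat.multinomial Finset.univ y : ℤ) * ((b j + (y j : ℤ) * c) * P y)
        = ((∑ i, b i) + (n : ℤ) * c) * ((Nat.multinomial Finset.univ y : ℤ) * P y) := by
      intro y hy
      have hys : ∑ i, y i = n := Finset.Nat.mem_antidiagonalTuple.mp hy
      have h3 : ∀ j ∈ (Finset.univ : Finset (Fin m)),
          (Nat.multinomial Finset.univ y : ℤ) * ((b j + (y j : ℤ) * c) * P y)
          = (b j + (y j : ℤ) * c) * ((Nat.multinomial Finset.univ y : ℤ) * P y) := by
        intro j _; ring
      rw [Finset.sum_congr rfl h3, ← Finset.sum_mul]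
      congr 1
      rw [Finset.sum_add_distrib, ← Finset.sum_mul]
      congr 2
      rw [← hys]; push_cast; ring
    rw [Finset.sum_congr rfl key, ← Finset.mul_sum, ih, Finset.prod_range_succ]
    ring

/-- Let k ≥ 1 and n ≥ 1 be integers, let a₀, a₁, ..., a_k be positive
integers with a = Σ_{i=0}^k a_i, and let c be an integer such that a_i + (n−1)·c > 0 for
every i = 0, 1, ..., k. Then the sum over all (k+1)-tuples (x₀, ..., x_k) of nonnegative
integers with Σ_{i=0}^k x_i = n of (n!/(x₀!⋯x_k!)) · ∏_{i=0}^k ∏_{ℓ=1}^{x_i} (a_i + (ℓ−1)·c)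
equals ∏_{ℓ=1}^n (a + (ℓ−1)·c). (The multivariate Pólya-Eggenberger pmf sums to one.) -/
theorem polya_sums_to_one (k n : ℕ) (hk : 1 ≤ k) (hn : 1 ≤ n)
    (a : Fin (k + 1) → ℤ) (ha : ∀ i, 0 < a i) (c : ℤ)
    (hac : ∀ i, a i + ((n : ℤ) - 1) * c > 0) :
    ∑ x ∈ (Fintype.piFinset fun _ : Fin (k + 1) => Finset.range (n + 1)).filter
        (fun x => (∑ i, x i) = n),
      (Nat.multinomial Finset.univ x : ℤ) *
        ∏ i, ∏ ℓ ∈ Finset.range (x i), (a i + (ℓ : ℤ) * c)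
      = ∏ ℓ ∈ Finset.range n, ((∑ i, a i) + (ℓ : ℤ) * c) := by
  have hset : (Fintype.piFinset fun _ : Fin (k + 1) => Finset.range (n + 1)).filter
      (fun x => (∑ i, x i) = n) = Finset.Nat.antidiagonalTuple (k + 1) n := by
    ext x
    rw [Finset.mem_filter, Fintype.mem_piFinset, Finset.Nat.mem_antidiagonalTuple]
    constructor
    · rintro ⟨-, h⟩; exact h
    · intro h
      refine ⟨fun i => ?_, h⟩
      rw [Finset.mem_range]
      have : x i ≤ n := h ▸ Finset.single_le_sum (fun _ _ => Nat.zero_le _) (Finset.mem_univ i)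
      omega
  rw [hset]
  exact polya_key (k + 1) a c n
end

section
/- Let k ≥ 1 and n ≥ 1 be integers, let a₀, a₁, ..., a_k be positive integers with a = Σ_{i=0}^k a_i, let c be a positive integer, and set C_i = -a_i/c for i = 0, 1, ..., k and N = -a/c. Then for every (k+1)-tuple (x₀, x₁, ..., x_k) of nonnegative integers with Σ_{i=0}^k x_i = n, (∏_{i=0}^k C(C_i, x_i)) / C(N, n) = (n! / (x₀!·x₁!⋯x_k!)) · (∏_{i=0}^k ∏_{ℓ=1}^{x_i} (a_i + (ℓ−1)·c)) / (∏_{ℓ=1}^n (a + (ℓ−1)·c)); that is, the multivariate Pólya-Eggenberger distribution is a special case of the multivariate generalized hypergeometric distribution. -/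
/-!
Writing `-t / c - ℓ = -c⁻¹ * (t + ℓ * c)`, each generalized binomial coefficient
`C(-t / c, m)` becomes `(-c⁻¹) ^ m * ∏_{ℓ < m} (t + ℓ * c) / m!`. Since the `x i` add up to
`n`, the powers of `-c⁻¹` in the numerator and the denominator cancel, and what is left is the
multinomial coefficient times the ratio of the rising products.
-/

open Finset

theorem prod_range_neg_div_sub {K : Type*} [Field K] {c : K} (hc : c ≠ 0) (t : K) (m : ℕ) :
    ∏ ℓ ∈ range m, (-t / c - ℓ) = (-c⁻¹) ^ m * ∏ ℓ ∈ range m, (t + ℓ * c) := by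
  rw [pow_eq_prod_const, ← prod_mul_distrib]
  refine prod_congr rfl fun ℓ _ => ?_
  field_simp
  ring

theorem genChoose_neg_div {c : ℝ} (hc : c ≠ 0) (t : ℝ) (m : ℕ) :
    genChoose (-t / c) m = (-c⁻¹) ^ m * (∏ ℓ ∈ range m, (t + ℓ * c)) / m.factorial := by
  rw [genChoose, prod_range_neg_div_sub hc]

theorem mul_div_div_mul_div_of_ne_zero {K : Type*} [Field K] {u : K} (hu : u ≠ 0)
    (p f q g : K) : u * p / f / (u * q / g) = g / f * (p / q) := by
  rw [mul_div_assoc u p f, mul_div_assoc u q g, mul_div_mul_left _ _ hu, div_div_eq_mul_div]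
  ring

theorem polya_is_genHyper_general (k n : ℕ)
    (a : Fin (k + 1) → ℕ) (c : ℕ) (hc : 0 < c)
    (x : Fin (k + 1) → ℕ) (hx : (∑ i, x i) = n) :
    (∏ i, genChoose (-(a i : ℝ) / c) (x i)) / genChoose (-((∑ i, a i : ℕ) : ℝ) / c) n
      = ((n.factorial : ℝ) / ∏ i, ((x i).factorial : ℝ)) *
        ((∏ i, ∏ ℓ ∈ Finset.range (x i), ((a i : ℝ) + (ℓ : ℝ) * c)) /
          (∏ ℓ ∈ Finset.range n, (((∑ i, a i : ℕ) : ℝ) + (ℓ : ℝ) * c))) := by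
  have hc' : (c : ℝ) ≠ 0 := Nat.cast_ne_zero.mpr hc.ne'
  simp only [genChoose_neg_div hc', prod_div_distrib, prod_mul_distrib, prod_pow_eq_pow_sum, hx]
  exact mul_div_div_mul_div_of_ne_zero (pow_ne_zero _ (neg_ne_zero.mpr (inv_ne_zero hc'))) _ _ _ _

/-- Let a₀, ..., a_k be positive integers with a = Σ a_i, let c be a
positive integer, and set C_i = -a_i/c and N = -a/c. Then for every tuple of
nonnegative integers with Σ x_i = n, (∏_{i=0}^k C(C_i, x_i)) / C(N, n) =
(n!/(x₀!⋯x_k!)) · (∏_{i=0}^k ∏_{ℓ=1}^{x_i} (a_i + (ℓ−1)·c)) / (∏_{ℓ=1}^n (a + (ℓ−1)·c));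
the multivariate Pólya-Eggenberger distribution is a special case of the multivariate
generalized hypergeometric distribution. -/
theorem polya_is_genHyper (k n : ℕ) (hk : 1 ≤ k) (hn : 1 ≤ n)
    (a : Fin (k + 1) → ℕ) (ha : ∀ i, 0 < a i) (c : ℕ) (hc : 0 < c)
    (x : Fin (k + 1) → ℕ) (hx : (∑ i, x i) = n) :
    (∏ i, genChoose (-(a i : ℝ) / c) (x i)) / genChoose (-((∑ i, a i : ℕ) : ℝ) / c) n
      = ((n.factorial : ℝ) / ∏ i, ((x i).factorial : ℝ)) *
        ((∏ i, ∏ ℓ ∈ Finset.range (x i), ((a i : ℝ) + (ℓ : ℝ) * c)) /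
          (∏ ℓ ∈ Finset.range n, (((∑ i, a i : ℕ) : ℝ) + (ℓ : ℝ) * c))) :=
  polya_is_genHyper_general k n a c hc x hx
end
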